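/- Let A be a commutative ring with spli(A) < ∞, and let G be a group such that every AG-module that is Gorenstein injective over A and has finite Gorenstein injective dimension over AG is Gorenstein injective over AG. Then fidim(AG) ≤ spli(A). -/

import Mathlib

set_option linter.unusedVariables false

open CategoryTheory

universe u

namespace GP


variable (R : Type u) [Ring R]

/-- Flatness of a module over an arbitrary ring, via the equational criterion:
every linear relation among elements of `M` is trivial. -/
def IsFlatMod (M : ModuleCat.{u} R) : Prop :=
  ∀ (n : ℕ) (r : Fin n → R) (x : Fin n → M), (∑ i, r i • x i) = 0 →
    ∃ (m : ℕ) (a : Fin n → Fin m → R) (y : Fin m → M),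
      (∀ i, x i = ∑ j, a i j • y j) ∧ ∀ j, (∑ i, r i * a i j) = 0

/-- `ResDimLE R C n M` : there is an exact sequence
`0 → G_n → ⋯ → G_0 → M → 0` with each `G_i` in the class `C`. -/
def ResDimLE (C : ModuleCat.{u} R → Prop) : ℕ → ModuleCat.{u} R → Prop
  | 0, M => C M
  | n+1, M => ∃ (K G : ModuleCat.{u} R) (ι : K ⟶ G) (π : G ⟶ M),
      C G ∧ Function.Injective ι ∧ Function.Surjective π ∧
      Function.Exact ι π ∧ ResDimLE C n K

/-- `CoresDimLE R C n M` : there is an exact sequence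
`0 → M → G_0 → ⋯ → G_n → 0` with each `G_i` in the class `C`. -/
def CoresDimLE (C : ModuleCat.{u} R → Prop) : ℕ → ModuleCat.{u} R → Prop
  | 0, M => C M
  | n+1, M => ∃ (G K : ModuleCat.{u} R) (ι : M ⟶ G) (π : G ⟶ K),
      C G ∧ Function.Injective ι ∧ Function.Surjective π ∧
      Function.Exact ι π ∧ CoresDimLE C n K

/-- The resolution dimension of `M` with respect to the class `C`, in `ℕ∞`. -/
noncomputable def resDim (C : ModuleCat.{u} R → Prop) (M : ModuleCat.{u} R) : ℕ∞ :=
  sInf {n : ℕ∞ | ∃ k : ℕ, n = (k : ℕ∞) ∧ ResDimLE R C k M}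

/-- The coresolution dimension of `M` with respect to the class `C`, in `ℕ∞`. -/
noncomputable def coresDim (C : ModuleCat.{u} R → Prop) (M : ModuleCat.{u} R) : ℕ∞ :=
  sInf {n : ℕ∞ | ∃ k : ℕ, n = (k : ℕ∞) ∧ CoresDimLE R C k M}

/-- Projective dimension. -/
noncomputable def projDim (M : ModuleCat.{u} R) : ℕ∞ :=
  resDim R (fun N => Module.Projective R N) M

/-- Flat dimension. -/
noncomputable def flatDim (M : ModuleCat.{u} R) : ℕ∞ :=
  resDim R (IsFlatMod R) M

/-- Injective dimension. -/
noncomputable def injDim (M : ModuleCat.{u} R) : ℕ∞ :=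
  coresDim R (fun N => Module.Injective R N) M

/-- `spli R` : supremum of the projective dimensions of injective modules. -/
noncomputable def spli : ℕ∞ :=
  ⨆ (I : ModuleCat.{u} R) (_ : Module.Injective R I), projDim R I

/-- `silp R` : supremum of the injective dimensions of projective modules. -/
noncomputable def silp : ℕ∞ :=
  ⨆ (P : ModuleCat.{u} R) (_ : Module.Projective R P), injDim R P

/-- `sfli R` : supremum of the flat dimensions of injective modules. -/
noncomputable def sfli : ℕ∞ :=
  ⨆ (I : ModuleCat.{u} R) (_ : Module.Injective R I), flatDim R I

/-- `silf R` : supremum of the injective dimensions of flat modules. -/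
noncomputable def silf : ℕ∞ :=
  ⨆ (F : ModuleCat.{u} R) (_ : IsFlatMod R F), injDim R F

/-- Finitistic injective dimension. -/
noncomputable def fidim : ℕ∞ :=
  ⨆ (M : ModuleCat.{u} R) (_ : injDim R M ≠ ⊤), injDim R M

/-- Finitistic projective dimension. -/
noncomputable def findim : ℕ∞ :=
  ⨆ (M : ModuleCat.{u} R) (_ : projDim R M ≠ ⊤), projDim R M

/-- Finitistic flat dimension. -/
noncomputable def ffdim : ℕ∞ :=
  ⨆ (M : ModuleCat.{u} R) (_ : flatDim R M ≠ ⊤), flatDim R M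

/-- `M` is Gorenstein projective: it arises as a kernel in a totally acyclic
complex of projectives. -/
def IsGProj (M : ModuleCat.{u} R) : Prop :=
  ∃ (P : ℤ → ModuleCat.{u} R) (d : ∀ i : ℤ, P i ⟶ P (i + 1)),
    (∀ i, Module.Projective R (P i)) ∧
    (∀ i, Function.Exact (d i) (d (i + 1))) ∧
    (∀ (Q : ModuleCat.{u} R), Module.Projective R Q →
      ∀ (i : ℤ) (f : P (i + 1) ⟶ Q), d i ≫ f = 0 →
        ∃ g : P (i + 1 + 1) ⟶ Q, d (i + 1) ≫ g = f) ∧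
    (∃ (i : ℤ) (e : M ⟶ P i), Function.Injective e ∧ Function.Exact e (d i))

/-- `M` is Gorenstein injective: it arises as a kernel in a totally acyclic
complex of injectives. -/
def IsGInj (M : ModuleCat.{u} R) : Prop :=
  ∃ (I : ℤ → ModuleCat.{u} R) (d : ∀ i : ℤ, I i ⟶ I (i + 1)),
    (∀ i, Module.Injective R (I i)) ∧
    (∀ i, Function.Exact (d i) (d (i + 1))) ∧
    (∀ (J : ModuleCat.{u} R), Module.Injective R J →
      ∀ (i : ℤ) (f : J ⟶ I (i + 1)), f ≫ d (i + 1) = 0 →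
        ∃ g : J ⟶ I i, g ≫ d i = f) ∧
    (∃ (i : ℤ) (e : M ⟶ I i), Function.Injective e ∧ Function.Exact e (d i))

section BTensor

variable {R}

/-- The defining relations of the balanced tensor product `N ⊗_R M` of a right
`R`-module `N` and a left `R`-module `M`, inside `N ⊗_ℤ M`. -/
def brel (N : ModuleCat.{u} Rᵐᵒᵖ) (M : ModuleCat.{u} R) :
    Submodule ℤ (TensorProduct ℤ N M) :=
  Submodule.span ℤ
    {z | ∃ (s : R) (n : N) (m : M),
      z = (MulOpposite.op s • n) ⊗ₜ[ℤ] m - n ⊗ₜ[ℤ] (s • m)}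

/-- The balanced tensor product `N ⊗_R M` of a right `R`-module and a left
`R`-module, as an abelian group (`ℤ`-module). -/
def BTensor (N : ModuleCat.{u} Rᵐᵒᵖ) (M : ModuleCat.{u} R) : Type u :=
  TensorProduct ℤ N M ⧸ brel N M

noncomputable instance (N : ModuleCat.{u} Rᵐᵒᵖ) (M : ModuleCat.{u} R) :
    AddCommGroup (BTensor N M) :=
  inferInstanceAs (AddCommGroup (TensorProduct ℤ N M ⧸ brel N M))

noncomputable instance (N : ModuleCat.{u} Rᵐᵒᵖ) (M : ModuleCat.{u} R) :
    Module ℤ (BTensor N M) :=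
  inferInstanceAs (Module ℤ (TensorProduct ℤ N M ⧸ brel N M))

/-- The map `N ⊗_R M → N ⊗_R M'` induced by an `R`-linear map `M → M'`. -/
noncomputable def bmap (N : ModuleCat.{u} Rᵐᵒᵖ) {M M' : ModuleCat.{u} R}
    (f : M ⟶ M') : BTensor N M →ₗ[ℤ] BTensor N M' :=
  Submodule.mapQ (brel N M) (brel N M')
    (LinearMap.lTensor N ((f.hom : M →ₗ[R] M').toAddMonoidHom.toIntLinearMap))
    (by
      rw [brel, Submodule.span_le]
      rintro z ⟨s, n, m, rfl⟩
      have h1 : ((f.hom : M →ₗ[R] M').toAddMonoidHom.toIntLinearMap) (s • m)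
          = s • ((f.hom : M →ₗ[R] M').toAddMonoidHom.toIntLinearMap) m :=
        (f.hom : M →ₗ[R] M').map_smul s m
      have key : (LinearMap.lTensor N ((f.hom : M →ₗ[R] M').toAddMonoidHom.toIntLinearMap))
          ((MulOpposite.op s • n) ⊗ₜ[ℤ] m - n ⊗ₜ[ℤ] (s • m)) =
          (MulOpposite.op s • n) ⊗ₜ[ℤ] ((f.hom : M →ₗ[R] M').toAddMonoidHom.toIntLinearMap m)
            - n ⊗ₜ[ℤ] (s • ((f.hom : M →ₗ[R] M').toAddMonoidHom.toIntLinearMap m)) := by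
        rw [map_sub, LinearMap.lTensor_tmul, LinearMap.lTensor_tmul, h1]
      exact (congrArg (· ∈ brel N M') key).mpr (Submodule.subset_span
        ⟨s, n, ((f.hom : M →ₗ[R] M').toAddMonoidHom.toIntLinearMap) m, rfl⟩))

end BTensor

/-- `M` is Gorenstein flat: it arises as a kernel in an acyclic complex of flat
modules which stays acyclic after tensoring with any injective right module. -/
def IsGFlat (M : ModuleCat.{u} R) : Prop :=
  ∃ (F : ℤ → ModuleCat.{u} R) (d : ∀ i : ℤ, F i ⟶ F (i + 1)),
    (∀ i, IsFlatMod R (F i)) ∧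
    (∀ i, Function.Exact (d i) (d (i + 1))) ∧
    (∀ (I : ModuleCat.{u} Rᵐᵒᵖ), Module.Injective Rᵐᵒᵖ I →
      ∀ i : ℤ, Function.Exact (bmap I (d i)) (bmap I (d (i + 1)))) ∧
    (∃ (i : ℤ) (e : M ⟶ F i), Function.Injective e ∧ Function.Exact e (d i))


variable (R : Type u) [Ring R] in
/-- Gorenstein projective dimension. -/
noncomputable def gprojDim (M : ModuleCat.{u} R) : ℕ∞ := resDim R (IsGProj R) M

variable (R : Type u) [Ring R] in
/-- Gorenstein injective dimension. -/
noncomputable def ginjDim (M : ModuleCat.{u} R) : ℕ∞ := coresDim R (IsGInj R) M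

variable (R : Type u) [Ring R] in
/-- Gorenstein flat dimension. -/
noncomputable def gflatDim (M : ModuleCat.{u} R) : ℕ∞ := resDim R (IsGFlat R) M


section GroupAlgebra

variable (A : Type u) [CommRing A] (G : Type u) [Group G]

/-- The augmentation map of a group algebra. -/
noncomputable def aug : MonoidAlgebra A G →+* A :=
  ((MonoidAlgebra.lift A A G) 1).toRingHom

/-- `A` as the trivial left module over the group algebra `A[G]`. -/
noncomputable def trivMod : ModuleCat.{u} (MonoidAlgebra A G) :=
  (ModuleCat.restrictScalars (aug A G)).obj (ModuleCat.of A A)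

/-- The augmentation map, seen on the opposite group algebra. -/
noncomputable def augOp : (MonoidAlgebra A G)ᵐᵒᵖ →+* A :=
  (aug A G).fromOpposite (fun a b => mul_comm _ _)

/-- `A` as the trivial right module over the group algebra `A[G]`. -/
noncomputable def trivModOp : ModuleCat.{u} (MonoidAlgebra A G)ᵐᵒᵖ :=
  (ModuleCat.restrictScalars (augOp A G)).obj (ModuleCat.of A A)

/-- Restriction of an `A[G]`-module to the base ring `A`. -/
noncomputable def resA (M : ModuleCat.{u} (MonoidAlgebra A G)) : ModuleCat.{u} A :=
  (ModuleCat.restrictScalars (algebraMap A (MonoidAlgebra A G))).obj M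

/-- The ring homomorphism `A[H] → A[G]` attached to a subgroup `H ≤ G`. -/
noncomputable def subRingHom (H : Subgroup G) :
    MonoidAlgebra A (↥H) →+* MonoidAlgebra A G :=
  MonoidAlgebra.mapDomainRingHom A H.subtype

/-- Restriction of an `A[G]`-module to `A[H]` for a subgroup `H ≤ G`. -/
noncomputable def resSub (H : Subgroup G) (M : ModuleCat.{u} (MonoidAlgebra A G)) :
    ModuleCat.{u} (MonoidAlgebra A (↥H)) :=
  (ModuleCat.restrictScalars (subRingHom A G H)).obj M

/-- The submodule of an `A[G]`-module generated by the elements `g • m - m`. -/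
noncomputable def coinvRel (M : ModuleCat.{u} (MonoidAlgebra A G)) :
    Submodule (MonoidAlgebra A G) M :=
  Submodule.span (MonoidAlgebra A G)
    {x | ∃ (g : G) (m : M), x = (MonoidAlgebra.of A G g) • m - m}

/-- The module of `G`-coinvariants of an `A[G]`-module. -/
noncomputable def Coinv (M : ModuleCat.{u} (MonoidAlgebra A G)) : Type u :=
  M ⧸ coinvRel A G M

noncomputable instance (M : ModuleCat.{u} (MonoidAlgebra A G)) :
    AddCommGroup (Coinv A G M) :=
  inferInstanceAs (AddCommGroup (M ⧸ coinvRel A G M))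

/-- A group is locally finite if every finitely generated subgroup is finite. -/
def LocallyFinite (G : Type u) [Group G] : Prop :=
  ∀ H : Subgroup G, H.FG → Finite H

end GroupAlgebra

/-- A ring is `ℵ₀`-Noetherian if every (left) ideal is countably generated. -/
def Aleph0Noetherian (S : Type u) [Ring S] : Prop :=
  ∀ I : Ideal S, ∃ s : Set S, s.Countable ∧ Ideal.span s = I

/-- A projective resolution of a module, as explicit data. -/
structure ProjRes (S : Type u) [Ring S] (M : ModuleCat.{u} S) where
  P : ℕ → ModuleCat.{u} S
  d : ∀ n : ℕ, P (n + 1) ⟶ P n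
  ε : P 0 ⟶ M
  proj : ∀ n, Module.Projective S (P n)
  epi : Function.Surjective ε
  exact0 : Function.Exact (d 0) ε
  exact : ∀ n, Function.Exact (d (n + 1)) (d n)

/-- The permutation module `A[K/L]` over the group algebra `A[K]`. -/
noncomputable def permMod (A : Type u) [CommRing A] (K : Type u) [Group K]
    (L : Subgroup K) : ModuleCat.{u} (MonoidAlgebra A K) :=
  ModuleCat.of _ (Representation.ofMulAction A K (K ⧸ L)).asModule


section Aux
variable {S : Type u} [Ring S]

instance homToLinCoe {M N : ModuleCat.{u} S} : Coe (M ⟶ N) (M →ₗ[S] N) :=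
  ⟨ModuleCat.Hom.hom⟩

instance linToHomCoe {M N : ModuleCat.{u} S} : Coe (M →ₗ[S] N) (M ⟶ N) :=
  ⟨fun f => ModuleCat.ofHom f⟩


lemma descend {W E X : ModuleCat.{u} S} (β : W ⟶ E) (hβ : Function.Surjective β)
    (f : W ⟶ X) (hk : ∀ w, β w = 0 → f w = 0) :
    ∃ g : E ⟶ X, ∀ w, g (β w) = f w := by
  have hle : LinearMap.ker (β : W →ₗ[S] E) ≤ LinearMap.ker (f : W →ₗ[S] X) :=
    fun w hw => hk w hw
  let e := LinearMap.quotKerEquivOfSurjective (β : W →ₗ[S] E) hβ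
  refine ⟨((LinearMap.ker (β : W →ₗ[S] E)).liftQ (f : W →ₗ[S] X) hle).comp
    e.symm.toLinearMap, fun w => ?_⟩
  have h1 : e.symm (β w) = Submodule.Quotient.mk w := by
    apply e.injective
    rw [LinearEquiv.apply_symm_apply]
    rfl
  show ((LinearMap.ker (β : W →ₗ[S] E)).liftQ (f : W →ₗ[S] X) hle) (e.symm (β w)) = f w
  rw [h1]
  rfl

lemma retraction_of_section {K W E : ModuleCat.{u} S} (α : K ⟶ W) (β : W ⟶ E)
    (hα : Function.Injective α) (hex : Function.Exact α β)
    (s : E ⟶ W) (hs : ∀ y, β (s y) = y) :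
    ∃ r : W ⟶ K, ∀ k, r (α k) = k := by
  let eqv := LinearEquiv.ofInjective (α : K →ₗ[S] W) hα
  have hmem : ∀ w : W, w - s (β w) ∈ LinearMap.range (α : K →ₗ[S] W) := by
    intro w
    have hb : β (w - s (β w)) = 0 := by
      rw [map_sub, hs, sub_self]
    simpa using (hex (w - s (β w))).1 hb
  refine ⟨eqv.symm.toLinearMap.comp
    ((LinearMap.id - (s : E →ₗ[S] W).comp (β : W →ₗ[S] E)).codRestrict
      (LinearMap.range (α : K →ₗ[S] W)) hmem), fun k => ?_⟩
  have hβα : β (α k) = 0 := hex.apply_apply_eq_zero k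
  show eqv.symm (((LinearMap.id - (s : E →ₗ[S] W).comp (β : W →ₗ[S] E)).codRestrict
      (LinearMap.range (α : K →ₗ[S] W)) hmem) (α k)) = k
  have h4 : (((LinearMap.id - (s : E →ₗ[S] W).comp (β : W →ₗ[S] E)).codRestrict
      (LinearMap.range (α : K →ₗ[S] W)) hmem) (α k)) = eqv k := by
    apply Subtype.ext
    show (α k : W) - s (β (α k)) = _
    rw [hβα, map_zero, sub_zero]
    rfl
  rw [h4, LinearEquiv.symm_apply_apply]

lemma section_of_retraction {K W E : ModuleCat.{u} S} (α : K ⟶ W) (β : W ⟶ E)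
    (hβ : Function.Surjective β) (hex : Function.Exact α β)
    (r : W ⟶ K) (hr : ∀ k, r (α k) = k) :
    ∃ s : E ⟶ W, ∀ y, β (s y) = y := by
  let φ : W ⟶ W := (LinearMap.id : W →ₗ[S] W) - (α : K →ₗ[S] W).comp (r : W →ₗ[S] K)
  have hk : ∀ w, β w = 0 → φ w = 0 := by
    intro w hw
    obtain ⟨k, hkw⟩ := (hex w).1 hw
    show w - α (r w) = 0
    rw [← hkw, hr, sub_self]
  obtain ⟨g, hg⟩ := descend β hβ φ hk
  refine ⟨g, fun y => ?_⟩
  obtain ⟨w, rfl⟩ := hβ y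
  have hβα : ∀ k : K, β (α k) = 0 := fun k => hex.apply_apply_eq_zero k
  have h2 : g (β w) = w - α (r w) := hg w
  rw [h2, map_sub, hβα, sub_zero]

lemma injective_of_retraction {K J : ModuleCat.{u} S} (hJ : Module.Injective S J)
    (ι : K ⟶ J) (r : J ⟶ K) (hr : ∀ k, r (ι k) = k) : Module.Injective S K := by
  constructor
  intro X Y _ _ _ _ f hf g
  obtain ⟨h, hh⟩ := hJ.out f hf ((ι : K →ₗ[S] J).comp g)
  refine ⟨(r : J →ₗ[S] K).comp h, fun x => ?_⟩
  show r (h (f x)) = g x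
  rw [hh x]
  exact hr (g x)

lemma injective_of_equiv {M N : Type u} [AddCommGroup M] [Module S M]
    [AddCommGroup N] [Module S N] (e : M ≃ₗ[S] N)
    (h : Module.Injective S M) : Module.Injective S N := by
  constructor
  intro X Y _ _ _ _ f hf g
  obtain ⟨h', hh⟩ := h.out f hf (e.symm.toLinearMap.comp g)
  refine ⟨e.toLinearMap.comp h', fun x => ?_⟩
  show e (h' (f x)) = g x
  rw [hh x]
  simp

lemma injective_prod {M N : Type u} [AddCommGroup M] [Module S M]
    [AddCommGroup N] [Module S N] (h : Module.Injective S M)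
    (h' : Module.Injective S N) : Module.Injective S (M × N) := by
  constructor
  intro X Y _ _ _ _ f hf g
  obtain ⟨h1, hh1⟩ := h.out f hf ((LinearMap.fst S M N).comp g)
  obtain ⟨h2, hh2⟩ := h'.out f hf ((LinearMap.snd S M N).comp g)
  refine ⟨h1.prod h2, fun x => ?_⟩
  have e1 := hh1 x
  have e2 := hh2 x
  apply Prod.ext
  · exact e1
  · exact e2

lemma injective_punit : Module.Injective S PUnit.{u+1} := by
  constructor
  intro X Y _ _ _ _ f hf g
  exact ⟨0, fun x => Subsingleton.elim _ _⟩



/-- `Chain j N K` : `K` is a `j`-th cosyzygy of `N` w.r.t. some injective coresolution. -/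
def Chain : ℕ → ModuleCat.{u} S → ModuleCat.{u} S → Prop
  | 0, N, K => Nonempty ((N : Type u) ≃ₗ[S] (K : Type u))
  | j+1, N, K => ∃ (I K₁ : ModuleCat.{u} S) (ι : N ⟶ I) (π : I ⟶ K₁),
      Module.Injective S I ∧ Function.Injective ι ∧ Function.Surjective π ∧
      Function.Exact ι π ∧ Chain j K₁ K

/-- compose an iso in front of a step -/
lemma step_of_equiv {N N' I K : ModuleCat.{u} S} (e : (N' : Type u) ≃ₗ[S] (N : Type u))
    (ι : N ⟶ I) (π : I ⟶ K) (h1 : Function.Injective ι) (hex : Function.Exact ι π) :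
    ∃ ι' : N' ⟶ I, Function.Injective ι' ∧ Function.Exact ι' π := by
  refine ⟨(ι : N →ₗ[S] I).comp e.toLinearMap, h1.comp e.injective, fun y => ?_⟩
  rw [hex y]
  constructor
  · rintro ⟨x, rfl⟩
    refine ⟨e.symm x, ?_⟩
    show ι (e (e.symm x)) = ι x
    rw [e.apply_symm_apply]
  · rintro ⟨x, rfl⟩
    exact ⟨e x, rfl⟩

/-- compose an iso after a step (on the cokernel) -/
lemma step_equiv_coker {N I K K' : ModuleCat.{u} S} (e : (K : Type u) ≃ₗ[S] (K' : Type u))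
    (ι : N ⟶ I) (π : I ⟶ K) (hs : Function.Surjective π) (hex : Function.Exact ι π) :
    ∃ π' : I ⟶ K', Function.Surjective π' ∧ Function.Exact ι π' := by
  refine ⟨e.toLinearMap.comp (π : I →ₗ[S] K), e.surjective.comp hs, fun y => ?_⟩
  rw [← hex y]
  show e (π y) = 0 ↔ _
  rw [map_eq_zero_iff _ e.injective]

lemma chain_equiv_start {N N' K : ModuleCat.{u} S} (e : (N' : Type u) ≃ₗ[S] (N : Type u)) :
    ∀ {j}, Chain j N K → Chain j N' K
  | 0, ⟨f⟩ => ⟨e.trans f⟩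
  | j+1, ⟨I, K₁, ι, π, hI, h1, h2, h3, h4⟩ => by
    obtain ⟨ι', h1', h3'⟩ := step_of_equiv e ι π h1 h3
    exact ⟨I, K₁, ι', π, hI, h1', h2, h3', h4⟩

lemma chain_append {K I K₁ : ModuleCat.{u} S} (ι : K ⟶ I) (π : I ⟶ K₁)
    (hI : Module.Injective S I) (h1 : Function.Injective ι) (h2 : Function.Surjective π)
    (h3 : Function.Exact ι π) :
    ∀ {p} {N : ModuleCat.{u} S}, Chain p N K → Chain (p+1) N K₁ := by
  intro p
  induction p with
  | zero =>
    rintro N ⟨e⟩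
    obtain ⟨ι', h1', h3'⟩ := step_of_equiv e ι π h1 h3
    exact ⟨I, K₁, ι', π, hI, h1', h2, h3', ⟨LinearEquiv.refl S K₁⟩⟩
  | succ p ih =>
    rintro N ⟨I', K₁', ι', π', hI', h1', h2', h3', h4'⟩
    exact ⟨I', K₁', ι', π', hI', h1', h2', h3', ih h4'⟩

/-- snoc decomposition of a chain -/
lemma chain_snoc : ∀ {j} {N K : ModuleCat.{u} S}, Chain (j+1) N K →
    ∃ (K₀ I : ModuleCat.{u} S) (ι : K₀ ⟶ I) (π : I ⟶ K),
      Chain j N K₀ ∧ Module.Injective S I ∧ Function.Injective ι ∧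
      Function.Surjective π ∧ Function.Exact ι π := by
  intro j
  induction j with
  | zero =>
    rintro N K ⟨I, K₁, ι, π, hI, h1, h2, h3, ⟨e⟩⟩
    obtain ⟨π', h2', h3'⟩ := step_equiv_coker e ι π h2 h3
    exact ⟨N, I, ι, π', ⟨LinearEquiv.refl S N⟩, hI, h1, h2', h3'⟩
  | succ j ih =>
    rintro N K ⟨I, K₁, ι, π, hI, h1, h2, h3, h4⟩
    obtain ⟨K₀, I', ι', π', hc, hI', h1', h2', h3'⟩ := ih h4
    exact ⟨K₀, I', ι', π', ⟨I, K₁, ι, π, hI, h1, h2, h3, hc⟩, hI', h1', h2', h3'⟩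

/-- split a coresolution of length `m` into an `n`-chain and a coresolution of length `m - n`. -/
lemma chain_split {C : ModuleCat.{u} S → Prop}
    (hC : ∀ M : ModuleCat.{u} S, C M → Module.Injective S M) :
    ∀ (n : ℕ) {m : ℕ} (h : n ≤ m) {N : ModuleCat.{u} S},
    CoresDimLE S C m N → ∃ K, Chain n N K ∧ CoresDimLE S C (m - n) K := by
  intro n
  induction n with
  | zero =>
    intro m h N hN
    exact ⟨N, ⟨LinearEquiv.refl S N⟩, by simpa using hN⟩
  | succ n ih =>
    intro m h N hN
    obtain ⟨m', rfl⟩ : ∃ m', m = m' + 1 := ⟨m - 1, by omega⟩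
    obtain ⟨G, K₁, ι, π, hG, h1, h2, h3, h4⟩ := hN
    obtain ⟨K, hc, hcr⟩ := ih (by omega : n ≤ m') h4
    refine ⟨K, ⟨G, K₁, ι, π, hC G hG, h1, h2, h3, hc⟩, ?_⟩
    have : m' + 1 - (n + 1) = m' - n := by omega
    rw [this]
    exact hcr

/-- from a chain ending in an injective, rebuild a coresolution. -/
lemma cores_of_chain : ∀ {n} {N K : ModuleCat.{u} S}, Chain n N K → Module.Injective S K →
    CoresDimLE S (fun M => Module.Injective S M) n N := by
  intro n
  induction n with
  | zero =>
    rintro N K ⟨e⟩ hK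
    exact injective_of_equiv e.symm hK
  | succ n ih =>
    rintro N K ⟨I, K₁, ι, π, hI, h1, h2, h3, h4⟩ hK
    exact ⟨I, K₁, ι, π, hI, h1, h2, h3, ih h4 hK⟩

/-- from a coresolution, get a chain ending in an injective. -/
lemma chain_of_cores {C : ModuleCat.{u} S → Prop}
    (hC : ∀ M : ModuleCat.{u} S, C M → Module.Injective S M) :
    ∀ {n} {N : ModuleCat.{u} S}, CoresDimLE S C n N →
    ∃ K, Chain n N K ∧ Module.Injective S K := by
  intro n
  induction n with
  | zero =>
    intro N hN
    exact ⟨N, ⟨LinearEquiv.refl S N⟩, hC N hN⟩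
  | succ n ih =>
    rintro N ⟨G, K₁, ι, π, hG, h1, h2, h3, h4⟩
    obtain ⟨K, hc, hK⟩ := ih h4
    exact ⟨K, ⟨G, K₁, ι, π, hC G hG, h1, h2, h3, hc⟩, hK⟩

lemma coresDimLE_mono {C C' : ModuleCat.{u} S → Prop} (h : ∀ M, C M → C' M) :
    ∀ {n} {N : ModuleCat.{u} S}, CoresDimLE S C n N → CoresDimLE S C' n N := by
  intro n
  induction n with
  | zero => exact fun hN => h _ hN
  | succ n ih =>
    rintro N ⟨G, K₁, ι, π, hG, h1, h2, h3, h4⟩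
    exact ⟨G, K₁, ι, π, h _ hG, h1, h2, h3, ih h4⟩



/-- Key splitting lemma: if `E` has projective dimension ≤ k and `K` is a `p`-th cosyzygy
with `p ≥ k`, then any extension of `E` by `K` splits (section form). -/
lemma lemB : ∀ (k : ℕ) (E : ModuleCat.{u} S),
    ResDimLE S (fun N => Module.Projective S N) k E →
    ∀ (p : ℕ), k ≤ p → ∀ (N K : ModuleCat.{u} S), Chain p N K →
    ∀ (W : ModuleCat.{u} S) (α : K ⟶ W) (β : W ⟶ E),
      Function.Injective α → Function.Exact α β → Function.Surjective β →
      ∃ s : E ⟶ W, ∀ y, β (s y) = y := by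
  intro k
  induction k with
  | zero =>
    intro E hE p hp N K hc W α β hα hex hβ
    have : Module.Projective S E := hE
    obtain ⟨s, hs⟩ := Module.projective_lifting_property (β : W →ₗ[S] E) LinearMap.id hβ
    exact ⟨s, fun y => LinearMap.congr_fun hs y⟩
  | succ k ih =>
    intro E hE p hp N K hc W α β hα hex hβ
    obtain ⟨S₁, P, ιP, ε, hP, hιP, hε, hexP, hres⟩ := hE
    obtain ⟨p', rfl⟩ : ∃ p', p = p' + 1 := ⟨p - 1, by omega⟩
    obtain ⟨K₀, I, ι', π', hcN, hI, hι', hπ', hex'⟩ := chain_snoc hc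
    -- lift ε along β
    obtain ⟨f, hf⟩ := Module.projective_lifting_property (β : W →ₗ[S] E) (ε : P →ₗ[S] E) hβ
    have hfap : ∀ x : P, β (f x) = ε x := fun x => LinearMap.congr_fun hf x
    -- u : S₁ → K with α (u x) = f (ιP x)
    let eqv := LinearEquiv.ofInjective (α : K →ₗ[S] W) hα
    have hmem : ∀ x : S₁, f (ιP x) ∈ LinearMap.range (α : K →ₗ[S] W) := by
      intro x
      have h0 : β (f (ιP x)) = 0 := by rw [hfap]; exact hexP.apply_apply_eq_zero x
      simpa using (hex (f (ιP x))).1 h0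
    let u : S₁ ⟶ K := eqv.symm.toLinearMap.comp
      ((f.comp (ιP : S₁ →ₗ[S] P)).codRestrict (LinearMap.range (α : K →ₗ[S] W)) hmem)
    have hu : ∀ x : S₁, α (u x) = f (ιP x) := by
      intro x
      show (α : K →ₗ[S] W) (eqv.symm ⟨f (ιP x), hmem x⟩) = f (ιP x)
      have h5 := eqv.apply_symm_apply ⟨f (ιP x), hmem x⟩
      calc (α : K →ₗ[S] W) (eqv.symm ⟨f (ιP x), hmem x⟩)
          = ((eqv (eqv.symm ⟨f (ιP x), hmem x⟩) : LinearMap.range (α : K →ₗ[S] W)) : W) := rfl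
        _ = f (ιP x) := by rw [h5]
    -- pullback V of π' : I ↠ K along u : S₁ → K
    let ψ : (↑I × ↑S₁ : Type u) →ₗ[S] K :=
      ((π' : I →ₗ[S] K).comp (LinearMap.fst S I S₁)) - ((u : S₁ →ₗ[S] K).comp (LinearMap.snd S I S₁))
    let Vsub : Submodule S ((↑I × ↑S₁ : Type u)) := LinearMap.ker ψ
    have hVmem : ∀ z : (↑I × ↑S₁ : Type u), z ∈ Vsub ↔ π' z.1 = u z.2 := by
      intro z
      constructor
      · intro hz
        have h2 : π' z.1 - u z.2 = 0 := hz
        rw [sub_eq_zero] at h2; exact h2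
      · intro hz
        show π' z.1 - u z.2 = 0
        rw [hz, sub_self]
    let V : ModuleCat.{u} S := ModuleCat.of S Vsub
    let pr2 : V ⟶ S₁ := (LinearMap.snd S I S₁).comp Vsub.subtype
    let pr1 : V →ₗ[S] I := (LinearMap.fst S I S₁).comp Vsub.subtype
    have hmemV : ∀ x : K₀, ((ι' x, 0) : (↑I × ↑S₁ : Type u)) ∈ Vsub := by
      intro x
      rw [hVmem]
      show π' (ι' x) = u 0
      rw [map_zero, hex'.apply_apply_eq_zero x]
    let ιV : K₀ ⟶ V := ((ι' : K₀ →ₗ[S] I).prod 0).codRestrict Vsub hmemV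
    have hιV : Function.Injective ιV := by
      intro a b hab
      apply hι'
      have h3 : ((ι' a, 0) : (↑I × ↑S₁ : Type u)) = (ι' b, 0) := congrArg Subtype.val hab
      exact (Prod.ext_iff.1 h3).1
    have hpr2 : Function.Surjective pr2 := by
      intro x
      obtain ⟨i, hi⟩ := hπ' (u x)
      exact ⟨⟨(i, x), (hVmem _).2 hi⟩, rfl⟩
    have hexV : Function.Exact ιV pr2 := by
      intro v
      obtain ⟨⟨vi, vs⟩, hvmem⟩ := v
      constructor
      · intro hv
        have hv2 : vs = 0 := hv
        have hπv : π' vi = 0 := by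
          have h9 := (hVmem (vi, vs)).1 hvmem
          rw [h9, hv2, map_zero]
        obtain ⟨x, hx⟩ := (hex' _).1 hπv
        refine ⟨x, ?_⟩
        apply Subtype.ext
        show ((ι' x, 0) : (↑I × ↑S₁ : Type u)) = (vi, vs)
        exact Prod.ext hx hv2.symm
      · rintro ⟨x, hx⟩
        have h10 : vs = 0 := by
          have := congrArg Subtype.val hx
          have h11 : ((ι' x, 0) : (↑I × ↑S₁ : Type u)) = (vi, vs) := this
          exact ((Prod.ext_iff.1 h11).2).symm
        exact h10
    -- apply induction hypothesis
    obtain ⟨σ, hσ⟩ := ih S₁ hres p' (by omega) N K₀ hcN V ιV pr2 hιV hexV hpr2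
    let w : (S₁ : Type u) →ₗ[S] I := pr1.comp σ.hom
    have hw : ∀ x : S₁, π' (w x) = u x := by
      intro x
      have h6 := (hVmem (Subtype.val (σ x : ↥Vsub))).1 (σ x : ↥Vsub).2
      have h7 : (Subtype.val (σ x : ↥Vsub)).2 = x := hσ x
      have h8 : π' (w x) = u ((Subtype.val (σ x : ↥Vsub)).2) := h6
      rw [h7] at h8
      exact h8
    -- extend w along ιP using injectivity of I
    obtain ⟨wt, hwt⟩ := hI.out (ιP : S₁ →ₗ[S] P) hιP w
    -- f' := f - α ∘ π' ∘ wt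
    let f' : P ⟶ W := (f : P →ₗ[S] W) - (α : K →ₗ[S] W).comp ((π' : I →ₗ[S] K).comp wt)
    have hf' : ∀ y : P, ε y = 0 → f' y = 0 := by
      intro y hy
      obtain ⟨x, rfl⟩ := (hexP y).1 hy
      show f (ιP x) - α (π' (wt (ιP x))) = 0
      rw [hwt, hw, hu, sub_self]
    obtain ⟨h, hh⟩ := descend ε hε f' hf'
    refine ⟨h, fun y => ?_⟩
    obtain ⟨x, rfl⟩ := hε y
    have h8 : h (ε x) = f' x := hh x
    rw [h8]
    show β (f x - α (π' (wt x))) = ε x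
    rw [map_sub, hfap, hex.apply_apply_eq_zero, sub_zero]

/-- Engine for `fidim ≤ spli`: if every injective has finite projective dimension ≤ n,
a `p`-th cosyzygy (`p ≥ n`) admitting a finite injective coresolution tail is injective. -/
lemma lemF {n : ℕ}
    (hs : ∀ E : ModuleCat.{u} S, Module.Injective S E →
      ∃ k, k ≤ n ∧ ResDimLE S (fun N => Module.Projective S N) k E) :
    ∀ (j : ℕ) (K K' : ModuleCat.{u} S), Chain j K K' → Module.Injective S K' →
    ∀ (p : ℕ), n ≤ p → ∀ N : ModuleCat.{u} S, Chain p N K → Module.Injective S K := by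
  intro j
  induction j with
  | zero =>
    rintro K K' ⟨e⟩ hK' p hp N hc
    exact injective_of_equiv e.symm hK'
  | succ j ih =>
    rintro K K' ⟨I, K₁, ι, π, hI, h1, h2, h3, h4⟩ hK' p hp N hc
    have hK₁ : Module.Injective S K₁ :=
      ih K₁ K' h4 hK' (p+1) (by omega) N (chain_append ι π hI h1 h2 h3 hc)
    obtain ⟨k, hk, hres⟩ := hs K₁ hK₁
    obtain ⟨s, hsec⟩ := lemB k K₁ hres p (by omega) N K hc I ι π h1 h3 h2
    obtain ⟨r, hr⟩ := retraction_of_section ι π h1 h3 s hsec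
    exact injective_of_retraction hI ι r hr


/-- every injective module is Gorenstein injective. -/
lemma ginj_of_injective {N : ModuleCat.{u} S} (hN : Module.Injective S N) : IsGInj S N := by
  refine ⟨fun _ => ModuleCat.of S (↑N × ↑N : Type u),
    fun i => ModuleCat.ofHom ((LinearMap.snd S N N).prod 0), fun i => injective_prod hN hN, ?_, ?_, ?_⟩
  · intro i z
    constructor
    · intro hz
      have h1 : z.2 = 0 := (Prod.ext_iff.1 hz).1
      exact ⟨(0, z.1), Prod.ext rfl h1.symm⟩
    · rintro ⟨x, rfl⟩
      show ((0 : N), (0 : N)) = 0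
      rfl
  · intro J hJ i f hf
    refine ⟨ModuleCat.ofHom (LinearMap.prod 0 ((LinearMap.fst S N N).comp f.hom)), ?_⟩
    apply ModuleCat.hom_ext
    apply LinearMap.ext
    intro x
    have h2 : (f x).2 = 0 := by
      have h3 := ConcreteCategory.congr_hom hf x
      have h4 : ((f x).2, (0 : N)) = (0 : (↑N × ↑N : Type u)) := h3
      exact (Prod.ext_iff.1 h4).1
    show (((0 : N), (f x).1).2, (0:N)) = f x
    exact Prod.ext rfl h2.symm
  · refine ⟨0, ModuleCat.ofHom (LinearMap.prod LinearMap.id 0), fun a b hab => (Prod.ext_iff.1 hab).1, ?_⟩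
    intro z
    constructor
    · intro hz
      have h1 : z.2 = 0 := (Prod.ext_iff.1 hz).1
      exact ⟨z.1, Prod.ext rfl h1.symm⟩
    · rintro ⟨x, rfl⟩
      show ((0:N), (0:N)) = 0
      rfl

/-- `K` has split extensions against injectives (in retraction form). -/
def SplitsInj (K : ModuleCat.{u} S) : Prop :=
  ∀ (E W : ModuleCat.{u} S), Module.Injective S E →
    ∀ (α : K ⟶ W) (β : W ⟶ E), Function.Injective α → Function.Exact α β →
      Function.Surjective β → ∃ r : W ⟶ K, ∀ k, r (α k) = k

lemma splitsInj_of_injective {K : ModuleCat.{u} S} (hK : Module.Injective S K) :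
    SplitsInj K := by
  intro E W hE α β hα hex hβ
  obtain ⟨r, hr⟩ := hK.out (α : K →ₗ[S] W) hα LinearMap.id
  exact ⟨r, hr⟩

lemma splitsInj_of_isGInj {K : ModuleCat.{u} S} (hK : IsGInj S K) : SplitsInj K := by
  obtain ⟨I, d, hinj, hexact, hlift, i₀, e, he_inj, he_exact⟩ := hK
  intro E W hE α β hα hex hβ
  let K₁ : ModuleCat.{u} S := ModuleCat.of S (LinearMap.range (d i₀ : I i₀ →ₗ[S] I (i₀+1)))
  let π : I i₀ ⟶ K₁ := (d i₀ : I i₀ →ₗ[S] I (i₀+1)).rangeRestrict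
  have hπ0 : ∀ y : I i₀, π y = 0 ↔ (d i₀) y = 0 := by
    intro y
    constructor
    · intro h; exact congrArg Subtype.val h
    · intro h; exact Subtype.ext h
  -- φ : extend e along α
  obtain ⟨φ, hφ⟩ := (hinj i₀).out (α : K →ₗ[S] W) hα (e : K →ₗ[S] I i₀)
  -- ψ : descend π ∘ φ along β
  have hdk : ∀ w : W, β w = 0 → (π.hom.comp φ : W ⟶ K₁) w = 0 := by
    intro w hw
    obtain ⟨k, rfl⟩ := (hex w).1 hw
    show π (φ (α k)) = 0
    rw [hφ k, hπ0]
    exact he_exact.apply_apply_eq_zero k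
  obtain ⟨ψ, hψ⟩ := descend β hβ (π.hom.comp φ : W ⟶ K₁) hdk
  -- lift ψ through the complex using total acyclicity
  let flift : E ⟶ I (i₀+1) :=
    (LinearMap.range (d i₀ : I i₀ →ₗ[S] I (i₀+1))).subtype.comp ψ.hom
  have hcomp : flift ≫ d (i₀+1) = 0 := by
    apply ModuleCat.hom_ext
    apply LinearMap.ext
    intro y
    obtain ⟨x, hx⟩ := (ψ y : ↥(LinearMap.range (d i₀ : I i₀ →ₗ[S] I (i₀+1)))).2
    show (d (i₀+1)) (Subtype.val (ψ y : ↥(LinearMap.range (d i₀ : I i₀ →ₗ[S] I (i₀+1))))) = 0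
    rw [← hx]
    exact (hexact i₀).apply_apply_eq_zero x
  obtain ⟨χ, hχ⟩ := hlift E hE i₀ flift hcomp
  have hπχ : ∀ y : E, π (χ y) = ψ y := by
    intro y
    apply Subtype.ext
    show (d i₀) (χ y) = Subtype.val (ψ y : ↥(LinearMap.range (d i₀ : I i₀ →ₗ[S] I (i₀+1))))
    exact ConcreteCategory.congr_hom hχ y
  -- ρ := φ - χ ∘ β lands in range e
  let ρ : W →ₗ[S] I i₀ := φ - (χ : E →ₗ[S] I i₀).comp (β : W →ₗ[S] E)
  have hρmem : ∀ w : W, ρ w ∈ LinearMap.range (e : K →ₗ[S] I i₀) := by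
    intro w
    have h1 : π (ρ w) = 0 := by
      show π (φ w - χ (β w)) = 0
      rw [map_sub, hπχ, hψ w]
      show π (φ w) - π (φ w) = 0
      rw [sub_self]
    have h2 : (d i₀) (ρ w) = 0 := (hπ0 _).1 h1
    simpa using (he_exact (ρ w)).1 h2
  let eqvE := LinearEquiv.ofInjective (e : K →ₗ[S] I i₀) he_inj
  refine ⟨eqvE.symm.toLinearMap.comp (ρ.codRestrict _ hρmem), fun k => ?_⟩
  have h3 : ρ (α k) = e k := by
    show φ (α k) - χ (β (α k)) = e k
    rw [hex.apply_apply_eq_zero k, map_zero, sub_zero, hφ]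
  apply he_inj
  show (e : K →ₗ[S] I i₀) (eqvE.symm (ρ.codRestrict _ hρmem (α k))) = e k
  have h4 : (ρ.codRestrict _ hρmem (α k)) = eqvE k := by
    apply Subtype.ext
    show ρ (α k) = _
    rw [h3]; rfl
  rw [h4, LinearEquiv.symm_apply_apply]


lemma splitsInj_of_equiv {X Y : ModuleCat.{u} S} (e : (X : Type u) ≃ₗ[S] (Y : Type u))
    (hX : SplitsInj X) : SplitsInj Y := by
  intro E W hE α β hα hex hβ
  let αX : X ⟶ W := (α : Y →ₗ[S] W).comp e.toLinearMap
  have h1 : Function.Injective αX := hα.comp e.injective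
  have h3 : Function.Exact αX β := by
    intro y
    rw [hex y]
    constructor
    · rintro ⟨x, rfl⟩
      refine ⟨e.symm x, ?_⟩
      show α (e (e.symm x)) = α x
      rw [e.apply_symm_apply]
    · rintro ⟨x, rfl⟩
      exact ⟨e x, rfl⟩
  obtain ⟨r, hr⟩ := hX E W hE αX β h1 h3 hβ
  refine ⟨e.toLinearMap.comp (r : W →ₗ[S] X), fun k => ?_⟩
  show e (r (α k)) = k
  have h2 : (α : Y →ₗ[S] W) k = αX (e.symm k) := by
    show α k = α (e (e.symm k))
    rw [e.apply_symm_apply]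
  rw [h2, hr, e.apply_symm_apply]

lemma splitsInj_prod {X Y : ModuleCat.{u} S} (hX : SplitsInj X) (hY : SplitsInj Y) :
    SplitsInj (ModuleCat.of S (↑X × ↑Y : Type u)) := by
  intro E W hE α β hα hex hβ
  -- retraction onto the X component
  have key : ∀ (X' Y' : ModuleCat.{u} S), SplitsInj X' →
      ∀ (α' : ModuleCat.of S (↑X' × ↑Y' : Type u) ⟶ W), Function.Injective α' →
      Function.Exact α' β →
      ∃ ρ : W →ₗ[S] X', ∀ z : (↑X' × ↑Y' : Type u), ρ (α' z) = z.1 := by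
    intro X' Y' hX' α' hα' hex'
    let N₂ : Submodule S W :=
      Submodule.map α'.hom
        ((⊥ : Submodule S X').prod (⊤ : Submodule S Y'))
    let W₁ : ModuleCat.{u} S := ModuleCat.of S (W ⧸ N₂)
    let q : W ⟶ W₁ := N₂.mkQ
    let αb : X' ⟶ W₁ := q.hom.comp
      (α'.hom.comp (LinearMap.inl S X' Y'))
    have hαb : Function.Injective αb := by
      intro a b hab
      have h1 : q (α' (a, 0) - α' (b, 0)) = 0 := by
        rw [map_sub]
        exact sub_eq_zero.2 hab
      have h2 : α' (a, 0) - α' (b, 0) ∈ N₂ := (Submodule.Quotient.mk_eq_zero N₂).1 h1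
      rw [← map_sub] at h2
      obtain ⟨z, hz, hz2⟩ := h2
      have h3 : z = ((a, 0) : (↑X' × ↑Y' : Type u)) - (b, 0) := hα' hz2
      have h4 : z.1 = a - b := by rw [h3]; rfl
      have h5 : z.1 = 0 := hz.1
      have h6 : a - b = 0 := by rw [← h4, h5]
      exact sub_eq_zero.1 h6
    have hle : N₂ ≤ LinearMap.ker (β : W →ₗ[S] E) := by
      rintro w ⟨z, hz, rfl⟩
      exact hex'.apply_apply_eq_zero z
    let βb : W₁ ⟶ E := N₂.liftQ (β : W →ₗ[S] E) hle
    have hβb : Function.Surjective βb := by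
      intro y
      obtain ⟨w, rfl⟩ := hβ y
      exact ⟨q w, rfl⟩
    have hexb : Function.Exact αb βb := by
      intro y
      obtain ⟨w, rfl⟩ : ∃ w, q w = y := N₂.mkQ_surjective y
      constructor
      · intro hy
        have hw : β w = 0 := hy
        obtain ⟨z, hz⟩ := (hex' w).1 hw
        refine ⟨z.1, ?_⟩
        show q (α' (z.1, 0)) = q w
        rw [← hz]
        rw [← sub_eq_zero, ← map_sub, ← map_sub]
        apply (Submodule.Quotient.mk_eq_zero N₂).2
        refine ⟨((0 : X'), -z.2), ⟨Submodule.zero_mem _, Submodule.mem_top⟩, ?_⟩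
        congr 1
        apply Prod.ext
        · show (0 : X') = z.1 - z.1
          rw [sub_self]
        · show -z.2 = 0 - z.2
          rw [zero_sub]
      · rintro ⟨x, hx⟩
        rw [← hx]
        show βb (q (α' (x, 0))) = 0
        show β (α' (x, 0)) = 0
        exact hex'.apply_apply_eq_zero _
    obtain ⟨r₁, hr₁⟩ := hX' E W₁ hE αb βb hαb hexb hβb
    refine ⟨r₁.hom.comp q.hom, fun z => ?_⟩
    have h7 : q (α' z) = αb z.1 := by
      show q (α' z) = q (α' (z.1, 0))
      rw [← sub_eq_zero, ← map_sub, ← map_sub]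
      apply (Submodule.Quotient.mk_eq_zero N₂).2
      refine ⟨((0 : X'), z.2), ⟨Submodule.zero_mem _, Submodule.mem_top⟩, ?_⟩
      congr 1
      apply Prod.ext
      · show (0 : X') = z.1 - z.1
        rw [sub_self]
      · show z.2 = z.2 - 0
        rw [sub_zero]
    show r₁ (q (α' z)) = z.1
    rw [h7, hr₁]
  obtain ⟨ρ₁, hρ₁⟩ := key X Y hX α hα hex
  -- symmetric: swap the factors
  let sw : ModuleCat.of S (↑Y × ↑X : Type u) ⟶ ModuleCat.of S (↑X × ↑Y : Type u) :=
    (LinearEquiv.prodComm S (Y : Type u) (X : Type u)).toLinearMap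
  let α2 : ModuleCat.of S (↑Y × ↑X : Type u) ⟶ W := α.hom.comp sw.hom
  have hα2 : Function.Injective α2 := by
    intro a b hab
    exact (LinearEquiv.prodComm S (Y:Type u) (X:Type u)).injective (hα hab)
  have hex2 : Function.Exact α2 β := by
    intro y
    rw [hex y]
    constructor
    · rintro ⟨z, rfl⟩
      exact ⟨(z.2, z.1), rfl⟩
    · rintro ⟨z, rfl⟩
      exact ⟨(z.2, z.1), rfl⟩
  obtain ⟨ρ₂, hρ₂⟩ := key Y X hY α2 hα2 hex2
  refine ⟨ρ₁.prod ρ₂, fun z => ?_⟩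
  have h8 : ρ₂ (α z) = z.2 := by
    have := hρ₂ (z.2, z.1)
    have h9 : α2 ((z.2, z.1) : (↑Y × ↑X : Type u)) = α z := rfl
    rw [h9] at this
    exact this
  show (ρ₁ (α z), ρ₂ (α z)) = z
  rw [hρ₁ z, h8]

lemma splitsInj_summand {X Y : ModuleCat.{u} S}
    (h : SplitsInj (ModuleCat.of S (↑X × ↑Y : Type u))) : SplitsInj X := by
  intro E W hE α β hα hex hβ
  let W' : ModuleCat.{u} S := ModuleCat.of S (↑W × ↑Y : Type u)
  let α' : ModuleCat.of S (↑X × ↑Y : Type u) ⟶ W' :=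
    (α : X →ₗ[S] W).prodMap (LinearMap.id : Y →ₗ[S] Y)
  let β' : W' ⟶ E := (β : W →ₗ[S] E).comp (LinearMap.fst S W Y)
  have hα' : Function.Injective α' := by
    intro a b hab
    have h1 : α a.1 = α b.1 := (Prod.ext_iff.1 hab).1
    have h2 : a.2 = b.2 := (Prod.ext_iff.1 hab).2
    exact Prod.ext (hα h1) h2
  have hβ' : Function.Surjective β' := by
    intro y
    obtain ⟨w, hw⟩ := hβ y
    exact ⟨((w, 0) : (↑W × ↑Y : Type u)), hw⟩
  have hex' : Function.Exact α' β' := by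
    intro z
    constructor
    · intro hz
      have h1 : β z.1 = 0 := hz
      obtain ⟨x, hx⟩ := (hex z.1).1 h1
      exact ⟨(x, z.2), Prod.ext hx rfl⟩
    · rintro ⟨z', rfl⟩
      show β (α z'.1) = 0
      exact hex.apply_apply_eq_zero z'.1
  obtain ⟨r', hr'⟩ := h E W' hE α' β' hα' hex' hβ'
  refine ⟨(LinearMap.fst S X Y).comp (r'.hom.comp
    (LinearMap.inl S W Y)), fun k => ?_⟩
  have h3 : ((α k, 0) : (↑W × ↑Y : Type u)) = α' ((k, 0) : (↑X × ↑Y : Type u)) := rfl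
  show (r' ((α k, 0) : (↑W × ↑Y : Type u))).1 = k
  rw [h3, hr']

/-- dual Schanuel lemma. -/
lemma coSchanuel {M J C I K₁ : ModuleCat.{u} S}
    (ι : M ⟶ J) (p : J ⟶ C) (hJ : Module.Injective S J)
    (hι : Function.Injective ι) (hp : Function.Surjective p) (hex1 : Function.Exact ι p)
    (e : M ⟶ I) (π : I ⟶ K₁) (hI : Module.Injective S I)
    (he : Function.Injective e) (hπ : Function.Surjective π) (hex2 : Function.Exact e π) :
    Nonempty ((↑C × ↑I : Type u) ≃ₗ[S] (↑K₁ × ↑J : Type u)) := by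
  let g : M →ₗ[S] (↑J × ↑I : Type u) := (ι : M →ₗ[S] J).prod (-(e : M →ₗ[S] I))
  let Δ : Submodule S (↑J × ↑I : Type u) := LinearMap.range g
  let D := (↑J × ↑I : Type u) ⧸ Δ
  let jD : J →ₗ[S] D := Δ.mkQ.comp (LinearMap.inl S J I)
  let iD : I →ₗ[S] D := Δ.mkQ.comp (LinearMap.inr S J I)
  have hπt : Δ ≤ LinearMap.ker ((π : I →ₗ[S] K₁).comp (LinearMap.snd S J I)) := by
    rintro z ⟨m, rfl⟩
    show π (-(e m)) = 0
    rw [map_neg, hex2.apply_apply_eq_zero, neg_zero]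
  let πt : D →ₗ[S] K₁ := Δ.liftQ _ hπt
  have hπtmk : ∀ z : (↑J × ↑I : Type u), πt (Δ.mkQ z) = π z.2 := fun z => rfl
  have hjD_inj : Function.Injective jD := by
    intro a b hab
    have h1 : Δ.mkQ ((a, 0) - (b, 0)) = 0 := by rw [map_sub]; exact sub_eq_zero.2 hab
    obtain ⟨m, hm⟩ := (Submodule.Quotient.mk_eq_zero Δ).1 h1
    simp only [g, LinearMap.prod_apply, Pi.prod, LinearMap.neg_apply, Function.prod_apply, Prod.mk_sub_mk,
      sub_self, Prod.mk.injEq] at hm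
    have h3 : e m = 0 := by
      have h4 : -(e m) = 0 := hm.2
      rwa [neg_eq_zero] at h4
    have h5 : m = 0 := he (by rw [h3, map_zero])
    have h6 := hm.1
    rw [h5, map_zero] at h6
    exact sub_eq_zero.1 h6.symm
  have hπt_surj : Function.Surjective πt := by
    intro k
    obtain ⟨i, hi⟩ := hπ k
    exact ⟨Δ.mkQ ((0, i) : (↑J × ↑I : Type u)), hi⟩
  have hex_jD : Function.Exact jD πt := by
    intro dd
    obtain ⟨z, rfl⟩ := Δ.mkQ_surjective dd
    constructor
    · intro hz
      have h1 : π z.2 = 0 := hz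
      obtain ⟨m, hm⟩ := (hex2 z.2).1 h1
      refine ⟨z.1 + ι m, ?_⟩
      show Δ.mkQ ((z.1 + ι m, 0) : (↑J × ↑I : Type u)) = Δ.mkQ z
      rw [← sub_eq_zero, ← map_sub]
      apply (Submodule.Quotient.mk_eq_zero Δ).2
      refine ⟨m, ?_⟩
      show (ι m, -(e m)) = ((z.1 + ι m, 0) : (↑J × ↑I : Type u)) - z
      apply Prod.ext
      · show ι m = z.1 + ι m - z.1
        rw [add_sub_cancel_left]
      · show -(e m) = 0 - z.2
        rw [zero_sub, hm]
    · rintro ⟨j, hj⟩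
      rw [← hj]
      show π (0 : I) = 0
      exact map_zero (π : I →ₗ[S] K₁)
  -- retraction of jD, giving D ≃ J × K₁
  obtain ⟨ρ, hρ⟩ := hJ.out jD hjD_inj LinearMap.id
  have hρ' : ∀ j : J, ρ (jD j) = j := hρ
  have hπtjD : ∀ j : J, πt (jD j) = 0 := by
    intro j
    show π (0 : I) = 0
    exact map_zero (π : I →ₗ[S] K₁)
  let θ : D →ₗ[S] (↑J × ↑K₁ : Type u) := ρ.prod πt
  have hθ : Function.Bijective θ := by
    constructor
    · intro a b hab
      have h1 : ρ a = ρ b := (Prod.ext_iff.1 hab).1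
      have h2 : πt a = πt b := (Prod.ext_iff.1 hab).2
      have h3 : πt (a - b) = 0 := by rw [map_sub, h2, sub_self]
      obtain ⟨j, hj⟩ := (hex_jD (a - b)).1 h3
      have h4 : ρ (a - b) = 0 := by rw [map_sub, h1, sub_self]
      rw [← hj, hρ'] at h4
      rw [h4, map_zero] at hj
      exact sub_eq_zero.1 hj.symm
    · intro z
      obtain ⟨d₀, hd₀⟩ := hπt_surj z.2
      refine ⟨d₀ - jD (ρ d₀) + jD z.1, ?_⟩
      apply Prod.ext
      · show ρ (d₀ - jD (ρ d₀) + jD z.1) = z.1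
        rw [map_add, map_sub, hρ', hρ', sub_self, zero_add]
      · show πt (d₀ - jD (ρ d₀) + jD z.1) = z.2
        rw [map_add, map_sub, hπtjD, hπtjD, sub_zero, add_zero, hd₀]
  -- symmetric side: D ≃ I × C
  have hpt : Δ ≤ LinearMap.ker ((p : J →ₗ[S] C).comp (LinearMap.fst S J I)) := by
    rintro z ⟨m, rfl⟩
    show p (ι m) = 0
    exact hex1.apply_apply_eq_zero m
  let pt : D →ₗ[S] C := Δ.liftQ _ hpt
  have hiD_inj : Function.Injective iD := by
    intro a b hab
    have h1 : Δ.mkQ ((0, a) - (0, b)) = 0 := by rw [map_sub]; exact sub_eq_zero.2 hab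
    obtain ⟨m, hm⟩ := (Submodule.Quotient.mk_eq_zero Δ).1 h1
    simp only [g, LinearMap.prod_apply, Pi.prod, LinearMap.neg_apply, Function.prod_apply, Prod.mk_sub_mk,
      sub_self, Prod.mk.injEq] at hm
    have h3 : m = 0 := hι (by rw [hm.1, map_zero])
    have h4 : -(e m) = a - b := hm.2
    rw [h3, map_zero, neg_zero] at h4
    exact sub_eq_zero.1 h4.symm
  have hpt_surj : Function.Surjective pt := by
    intro c
    obtain ⟨j, hj⟩ := hp c
    exact ⟨Δ.mkQ ((j, 0) : (↑J × ↑I : Type u)), hj⟩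
  have hex_iD : Function.Exact iD pt := by
    intro dd
    obtain ⟨z, rfl⟩ := Δ.mkQ_surjective dd
    constructor
    · intro hz
      have h1 : p z.1 = 0 := hz
      obtain ⟨m, hm⟩ := (hex1 z.1).1 h1
      refine ⟨z.2 + e m, ?_⟩
      show Δ.mkQ ((0, z.2 + e m) : (↑J × ↑I : Type u)) = Δ.mkQ z
      rw [← sub_eq_zero, ← map_sub]
      apply (Submodule.Quotient.mk_eq_zero Δ).2
      refine ⟨-m, ?_⟩
      show (ι (-m), -(e (-m))) = ((0, z.2 + e m) : (↑J × ↑I : Type u)) - z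
      apply Prod.ext
      · show ι (-m) = 0 - z.1
        rw [map_neg, hm, zero_sub]
      · show -(e (-m)) = z.2 + e m - z.2
        rw [map_neg, neg_neg, add_sub_cancel_left]
    · rintro ⟨i, hi⟩
      rw [← hi]
      show p (0 : J) = 0
      exact map_zero (p : J →ₗ[S] C)
  obtain ⟨ρ', hρ'2⟩ := hI.out iD hiD_inj LinearMap.id
  have hρ'' : ∀ i : I, ρ' (iD i) = i := hρ'2
  have hptiD : ∀ i : I, pt (iD i) = 0 := by
    intro i
    show p (0 : J) = 0
    exact map_zero (p : J →ₗ[S] C)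
  let θ' : D →ₗ[S] (↑I × ↑C : Type u) := ρ'.prod pt
  have hθ' : Function.Bijective θ' := by
    constructor
    · intro a b hab
      have h1 : ρ' a = ρ' b := (Prod.ext_iff.1 hab).1
      have h2 : pt a = pt b := (Prod.ext_iff.1 hab).2
      have h3 : pt (a - b) = 0 := by rw [map_sub, h2, sub_self]
      obtain ⟨i, hi⟩ := (hex_iD (a - b)).1 h3
      have h4 : ρ' (a - b) = 0 := by rw [map_sub, h1, sub_self]
      rw [← hi, hρ''] at h4
      rw [h4, map_zero] at hi
      exact sub_eq_zero.1 hi.symm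
    · intro z
      obtain ⟨d₀, hd₀⟩ := hpt_surj z.2
      refine ⟨d₀ - iD (ρ' d₀) + iD z.1, ?_⟩
      apply Prod.ext
      · show ρ' (d₀ - iD (ρ' d₀) + iD z.1) = z.1
        rw [map_add, map_sub, hρ'', hρ'', sub_self, zero_add]
      · show pt (d₀ - iD (ρ' d₀) + iD z.1) = z.2
        rw [map_add, map_sub, hptiD, hptiD, sub_zero, add_zero, hd₀]
  let E1 : D ≃ₗ[S] (↑J × ↑K₁ : Type u) := LinearEquiv.ofBijective θ hθ
  let E2 : D ≃ₗ[S] (↑I × ↑C : Type u) := LinearEquiv.ofBijective θ' hθ'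
  exact ⟨(LinearEquiv.prodComm S (C : Type u) (I : Type u)).trans
    (E2.symm.trans (E1.trans (LinearEquiv.prodComm S (J : Type u) (K₁ : Type u))))⟩



/-- From a Gorenstein injective module, extract one step of the left resolution:
a surjection from it? No: an embedding into an injective whose cokernel is again GInj. -/
lemma ginj_step {K : ModuleCat.{u} S} (hK : IsGInj S K) :
    ∃ (Ig K₁g : ModuleCat.{u} S) (e : K ⟶ Ig) (π' : Ig ⟶ K₁g),
      Module.Injective S Ig ∧ IsGInj S K₁g ∧ Function.Injective e ∧
      Function.Surjective π' ∧ Function.Exact e π' := by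
  obtain ⟨I, d, hinj, hexact, hlift, i₀, e, he_inj, he_exact⟩ := hK
  let K₁g : ModuleCat.{u} S := ModuleCat.of S (LinearMap.range (d i₀ : I i₀ →ₗ[S] I (i₀+1)))
  let π' : I i₀ ⟶ K₁g := (d i₀ : I i₀ →ₗ[S] I (i₀+1)).rangeRestrict
  refine ⟨I i₀, K₁g, e, π', hinj i₀, ?_, he_inj, (d i₀ : I i₀ →ₗ[S] I (i₀+1)).surjective_rangeRestrict, ?_⟩
  · refine ⟨I, d, hinj, hexact, hlift, i₀ + 1,
      (LinearMap.range (d i₀ : I i₀ →ₗ[S] I (i₀+1))).subtype, Subtype.val_injective, ?_⟩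
    intro y
    rw [(hexact i₀) y]
    constructor
    · rintro ⟨x, rfl⟩
      exact ⟨⟨d i₀ x, LinearMap.mem_range_self _ x⟩, rfl⟩
    · rintro ⟨⟨x, hx⟩, rfl⟩
      exact hx
  · intro y
    constructor
    · intro hy
      have h1 : (d i₀) y = 0 := congrArg Subtype.val hy
      exact (he_exact y).1 h1
    · rintro ⟨x, rfl⟩
      apply Subtype.ext
      exact he_exact.apply_apply_eq_zero x

/-- Stably Gorenstein injective: direct sum with an injective is GInj ⊕ injective. -/
def StablyGInj (K : ModuleCat.{u} S) : Prop :=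
  ∃ (Kg J₁ J₂ : ModuleCat.{u} S), IsGInj S Kg ∧ Module.Injective S J₁ ∧
    Module.Injective S J₂ ∧ Nonempty ((↑K × ↑J₁ : Type u) ≃ₗ[S] (↑Kg × ↑J₂ : Type u))

lemma stablyGInj_of_isGInj {K : ModuleCat.{u} S} (hK : IsGInj S K) : StablyGInj K :=
  ⟨K, ModuleCat.of S PUnit, ModuleCat.of S PUnit, hK, injective_punit, injective_punit,
    ⟨LinearEquiv.refl S _⟩⟩

lemma splitsInj_of_stablyGInj {K : ModuleCat.{u} S} (hK : StablyGInj K) : SplitsInj K := by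
  obtain ⟨Kg, J₁, J₂, hKg, hJ₁, hJ₂, ⟨f⟩⟩ := hK
  have h1 : SplitsInj (ModuleCat.of S (↑Kg × ↑J₂ : Type u)) :=
    splitsInj_prod (splitsInj_of_isGInj hKg) (splitsInj_of_injective hJ₂)
  have h2 : SplitsInj (ModuleCat.of S (↑K × ↑J₁ : Type u)) :=
    splitsInj_of_equiv (X := ModuleCat.of S (↑Kg × ↑J₂ : Type u))
      (Y := ModuleCat.of S (↑K × ↑J₁ : Type u)) f.symm h1
  exact splitsInj_summand h2

lemma stablyGInj_step {K J C : ModuleCat.{u} S} (hK : StablyGInj K)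
    (ι : K ⟶ J) (π : J ⟶ C) (hJ : Module.Injective S J) (hι : Function.Injective ι)
    (hπ : Function.Surjective π) (hex : Function.Exact ι π) : StablyGInj C := by
  obtain ⟨Kg, J₁, J₂, hKg, hJ₁, hJ₂, ⟨f⟩⟩ := hK
  obtain ⟨Ig, K₁g, eg, πg, hIg, hK₁g, heg, hπg, hexg⟩ := ginj_step hKg
  let M₀ : ModuleCat.{u} S := ModuleCat.of S (↑K × ↑J₁ : Type u)
  -- first exact sequence : M₀ ↪ J × J₁ ↠ C
  let ιa : M₀ ⟶ ModuleCat.of S (↑J × ↑J₁ : Type u) :=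
    (ι : K →ₗ[S] J).prodMap (LinearMap.id : J₁ →ₗ[S] J₁)
  let πa : ModuleCat.of S (↑J × ↑J₁ : Type u) ⟶ C :=
    (π : J →ₗ[S] C).comp (LinearMap.fst S J J₁)
  have hιa : Function.Injective ιa := by
    intro a b hab
    exact Prod.ext (hι (Prod.ext_iff.1 hab).1) (Prod.ext_iff.1 hab).2
  have hπa : Function.Surjective πa := by
    intro c
    obtain ⟨j, hj⟩ := hπ c
    exact ⟨((j, 0) : (↑J × ↑J₁ : Type u)), hj⟩
  have hexa : Function.Exact ιa πa := by
    intro z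
    constructor
    · intro hz
      obtain ⟨k, hk⟩ := (hex z.1).1 hz
      exact ⟨(k, z.2), Prod.ext hk rfl⟩
    · rintro ⟨w, rfl⟩
      show π (ι w.1) = 0
      exact hex.apply_apply_eq_zero w.1
  -- second exact sequence : M₀ ↪ Ig × J₂ ↠ K₁g
  let ιb : M₀ ⟶ ModuleCat.of S (↑Ig × ↑J₂ : Type u) :=
    ((eg : Kg →ₗ[S] Ig).prodMap (LinearMap.id : J₂ →ₗ[S] J₂)).comp f.toLinearMap
  let πb : ModuleCat.of S (↑Ig × ↑J₂ : Type u) ⟶ K₁g :=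
    (πg : Ig →ₗ[S] K₁g).comp (LinearMap.fst S Ig J₂)
  have hιb : Function.Injective ιb := by
    apply Function.Injective.comp (g := (eg : Kg →ₗ[S] Ig).prodMap (LinearMap.id : J₂ →ₗ[S] J₂))
    · intro a b hab
      exact Prod.ext (heg (Prod.ext_iff.1 hab).1) (Prod.ext_iff.1 hab).2
    · exact f.injective
  have hπb : Function.Surjective πb := by
    intro c
    obtain ⟨j, hj⟩ := hπg c
    exact ⟨((j, 0) : (↑Ig × ↑J₂ : Type u)), hj⟩
  have hexb : Function.Exact ιb πb := by
    intro z
    constructor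
    · intro hz
      obtain ⟨k, hk⟩ := (hexg z.1).1 hz
      refine ⟨f.symm (k, z.2), ?_⟩
      show ((eg : Kg →ₗ[S] Ig).prodMap (LinearMap.id : J₂ →ₗ[S] J₂)) (f (f.symm (k, z.2))) = z
      rw [f.apply_symm_apply]
      exact Prod.ext hk rfl
    · rintro ⟨w, rfl⟩
      show πg (((eg : Kg →ₗ[S] Ig).prodMap (LinearMap.id : J₂ →ₗ[S] J₂)) (f w)).1 = 0
      exact hexg.apply_apply_eq_zero (f w).1
  obtain ⟨fc⟩ := coSchanuel (M := M₀) (J := ModuleCat.of S (↑J × ↑J₁ : Type u)) (C := C)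
    (I := ModuleCat.of S (↑Ig × ↑J₂ : Type u)) (K₁ := K₁g)
    ιa πa (injective_prod hJ hJ₁) hιa hπa hexa
    ιb πb (injective_prod hIg hJ₂) hιb hπb hexb
  exact ⟨K₁g, ModuleCat.of S (↑Ig × ↑J₂ : Type u), ModuleCat.of S (↑J × ↑J₁ : Type u),
    hK₁g, injective_prod hIg hJ₂, injective_prod hJ hJ₁, ⟨fc⟩⟩

/-- A (stably) Gorenstein injective module of finite injective dimension is injective. -/
lemma lemH : ∀ (q : ℕ) (K : ModuleCat.{u} S), StablyGInj K →
    CoresDimLE S (fun M => Module.Injective S M) q K → Module.Injective S K := by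
  intro q
  induction q with
  | zero => exact fun K _ h => h
  | succ q ih =>
    rintro K hK ⟨J, C, ι, π, hJ, h1, h2, h3, h4⟩
    have hC : Module.Injective S C := ih C (stablyGInj_step hK ι π hJ h1 h2 h3) h4
    obtain ⟨r, hr⟩ := splitsInj_of_stablyGInj hK C J hC ι π h1 h3 h2
    exact injective_of_retraction hJ ι r hr


end Aux


section Restrict
open TensorProduct
variable {A : Type u} [CommRing A] {S : Type u} [Ring S] [Algebra A S] [Module.Flat A S]

/-- restriction of scalars along a flat algebra preserves injectivity of modules. -/
lemma injective_restrict_of_flat (M : ModuleCat.{u} S) (hM : Module.Injective S M) :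
    Module.Injective A ((ModuleCat.restrictScalars (algebraMap A S)).obj M) := by
  constructor
  intro X Y _ _ _ _ g hg f
  -- S-module structure on tensor products
  -- the S-linear extension F : S ⊗[A] X →ₗ[S] M of f
  let B : S →ₗ[A] X →ₗ[A] ((ModuleCat.restrictScalars (algebraMap A S)).obj M) :=
    { toFun := fun s =>
        { toFun := fun x => (s • (f x : M) : M)
          map_add' := fun x y => by
            show s • (f (x + y) : M) = s • (f x : M) + s • (f y : M)
            rw [map_add, smul_add]
          map_smul' := fun a x => by
            show s • ((f (a • x) : M)) = algebraMap A S a • (s • (f x : M))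
            have h1 : (f (a • x) : M) = algebraMap A S a • (f x : M) := f.map_smul a x
            rw [h1, ← mul_smul, ← mul_smul, Algebra.commutes] }
      map_add' := fun s t => by
        apply LinearMap.ext; intro x; exact add_smul s t (f x : M)
      map_smul' := fun a s => by
        apply LinearMap.ext; intro x
        show (a • s) • (f x : M) = algebraMap A S a • (s • (f x : M))
        rw [Algebra.smul_def, mul_smul] }
  let F₀ : S ⊗[A] X →ₗ[A] ((ModuleCat.restrictScalars (algebraMap A S)).obj M) :=
    TensorProduct.lift B
  have hF₀smul : ∀ (s : S) (z : S ⊗[A] X), F₀ (s • z) = s • (F₀ z : M) := by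
    intro s z
    induction z using TensorProduct.induction_on with
    | zero => rw [smul_zero, map_zero, smul_zero]
    | tmul t x =>
      rw [TensorProduct.smul_tmul']
      show ((s • t) • (f x : M) : M) = s • (t • (f x : M))
      rw [smul_eq_mul, mul_smul]
    | add z₁ z₂ ih₁ ih₂ => rw [smul_add, map_add, map_add, ih₁, ih₂, smul_add]
  -- the S-linear injection G : S ⊗[A] X → S ⊗[A] Y
  have hGinj : Function.Injective (LinearMap.lTensor S g) :=
    Module.Flat.lTensor_preserves_injective_linearMap g hg
  have hGsmul : ∀ (s : S) (z : S ⊗[A] X),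
      (LinearMap.lTensor S g) (s • z) = s • (LinearMap.lTensor S g) z := by
    intro s z
    induction z using TensorProduct.induction_on with
    | zero => rw [smul_zero, map_zero, smul_zero]
    | tmul t x =>
      rw [TensorProduct.smul_tmul', LinearMap.lTensor_tmul, LinearMap.lTensor_tmul,
        TensorProduct.smul_tmul']
    | add z₁ z₂ ih₁ ih₂ => rw [smul_add, map_add, map_add, ih₁, ih₂, smul_add]
  let G : S ⊗[A] X →ₗ[S] S ⊗[A] Y :=
    { toFun := LinearMap.lTensor S g
      map_add' := (LinearMap.lTensor S g).map_add
      map_smul' := hGsmul }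
  let F : S ⊗[A] X →ₗ[S] M :=
    { toFun := F₀
      map_add' := F₀.map_add
      map_smul' := hF₀smul }
  obtain ⟨H, hH⟩ := hM.out G hGinj F
  -- h : y ↦ H (1 ⊗ y)
  let h : Y →ₗ[A] ((ModuleCat.restrictScalars (algebraMap A S)).obj M) :=
    { toFun := fun y => (H ((1 : S) ⊗ₜ[A] y) : M)
      map_add' := fun y₁ y₂ => by
        show (H ((1 : S) ⊗ₜ[A] (y₁ + y₂)) : M) = (H ((1:S) ⊗ₜ[A] y₁) : M) + (H ((1:S) ⊗ₜ[A] y₂) : M)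
        rw [TensorProduct.tmul_add, map_add]
      map_smul' := fun a y => by
        show (H ((1 : S) ⊗ₜ[A] (a • y)) : M) = algebraMap A S a • (H ((1:S) ⊗ₜ[A] y) : M)
        have h1 : (1 : S) ⊗ₜ[A] (a • y) = (algebraMap A S a • (1:S)) ⊗ₜ[A] y := by
          rw [TensorProduct.tmul_smul, TensorProduct.smul_tmul', Algebra.smul_def,
            Algebra.algebraMap_eq_smul_one]
          rw [smul_eq_mul, mul_one, Algebra.smul_def, mul_one]
        rw [h1, ← TensorProduct.smul_tmul', H.map_smul] }
  refine ⟨h, fun x => ?_⟩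
  show (H ((1 : S) ⊗ₜ[A] (g x)) : M) = f x
  have h2 : (1 : S) ⊗ₜ[A] (g x) = G ((1:S) ⊗ₜ[A] x) := by
    show _ = (LinearMap.lTensor S g) ((1:S) ⊗ₜ[A] x)
    rw [LinearMap.lTensor_tmul]
  rw [h2, hH]
  show ((1 : S) • (f x : M) : M) = f x
  rw [one_smul]


end Restrict

section Restrict2
variable {A : Type u} [CommRing A] {S : Type u} [Ring S] [Algebra A S] [Module.Flat A S]

/-- restrict a linear equivalence along the algebra map. -/
def equivRestrict {N K : ModuleCat.{u} S} (e : (N : Type u) ≃ₗ[S] (K : Type u)) :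
    ((ModuleCat.restrictScalars (algebraMap A S)).obj N : Type u) ≃ₗ[A]
      ((ModuleCat.restrictScalars (algebraMap A S)).obj K : Type u) where
  toFun := e
  invFun := e.symm
  left_inv := e.left_inv
  right_inv := e.right_inv
  map_add' := e.map_add
  map_smul' := fun a x => e.map_smul (algebraMap A S a) x

lemma chain_restrict : ∀ {j : ℕ} {N K : ModuleCat.{u} S}, Chain j N K →
    Chain j ((ModuleCat.restrictScalars (algebraMap A S)).obj N)
      ((ModuleCat.restrictScalars (algebraMap A S)).obj K) := by
  intro j
  induction j with
  | zero =>
    rintro N K ⟨e⟩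
    exact ⟨equivRestrict e⟩
  | succ j ih =>
    rintro N K ⟨I, K₁, ι, π, hI, h1, h2, h3, h4⟩
    exact ⟨(ModuleCat.restrictScalars (algebraMap A S)).obj I,
      (ModuleCat.restrictScalars (algebraMap A S)).obj K₁,
      (ModuleCat.restrictScalars (algebraMap A S)).map ι,
      (ModuleCat.restrictScalars (algebraMap A S)).map π,
      injective_restrict_of_flat I hI, h1, h2, h3, ih h4⟩

end Restrict2

section ENat
lemma sInf_mem_of_ne_top {T : Set ℕ∞} (h : sInf T ≠ ⊤) : sInf T ∈ T := by
  have hne : ∃ k : ℕ, (k : ℕ∞) ∈ T := by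
    by_contra hc
    push_neg at hc
    apply h
    apply le_antisymm le_top
    apply le_sInf
    intro b hb
    induction b using WithTop.recTopCoe with
    | top => exact le_rfl
    | coe k => exact absurd hb (hc k)
  have hne' : {k : ℕ | (k : ℕ∞) ∈ T}.Nonempty := hne
  have heq : sInf T = ((sInf {k : ℕ | (k : ℕ∞) ∈ T} : ℕ) : ℕ∞) := by
    apply le_antisymm
    · exact sInf_le (Nat.sInf_mem hne')
    · apply le_sInf
      intro b hb
      induction b using WithTop.recTopCoe with
      | top => exact le_top
      | coe k => exact Nat.cast_le.2 (Nat.sInf_le hb)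
  rw [heq]
  exact Nat.sInf_mem hne'
end ENat

theorem stmt7 (A : Type u) [CommRing A] (G : Type u) [Group G]
    (hA : spli A ≠ ⊤)
    (hyp : ∀ M : ModuleCat.{u} (MonoidAlgebra A G),
      IsGInj A (resA A G M) → ginjDim (MonoidAlgebra A G) M ≠ ⊤ →
        IsGInj (MonoidAlgebra A G) M) :
    fidim (MonoidAlgebra A G) ≤ spli A := by
  classical
  obtain ⟨n, hn⟩ : ∃ n : ℕ, spli A = (n : ℕ∞) := by
    rcases WithTop.ne_top_iff_exists.1 hA with ⟨n, hn⟩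
    exact ⟨n, hn.symm⟩
  -- every injective A-module has a projective resolution of length ≤ n
  have hs : ∀ E : ModuleCat.{u} A, Module.Injective A E →
      ∃ k, k ≤ n ∧ ResDimLE A (fun N => Module.Projective A N) k E := by
    intro E hE
    have h1 : projDim A E ≤ spli A := by
      refine le_trans ?_ (le_iSup (fun I : ModuleCat.{u} A =>
        ⨆ (_ : Module.Injective A I), projDim A I) E)
      exact le_iSup (fun _ : Module.Injective A E => projDim A E) hE
    rw [hn] at h1
    have h2 : projDim A E ≠ ⊤ := fun hc => by rw [hc] at h1; exact absurd h1 (by simp)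
    have h3 := sInf_mem_of_ne_top (T := {x : ℕ∞ | ∃ k : ℕ, x = (k : ℕ∞) ∧
      ResDimLE A (fun N => Module.Projective A N) k E}) h2
    obtain ⟨k, hk1, hk2⟩ := h3
    refine ⟨k, ?_, hk2⟩
    have h4 : (k : ℕ∞) ≤ (n : ℕ∞) := by
      rw [← hk1]
      exact h1
    exact_mod_cast h4
  have main : ∀ M : ModuleCat.{u} (MonoidAlgebra A G),
      injDim (MonoidAlgebra A G) M ≠ ⊤ → injDim (MonoidAlgebra A G) M ≤ spli A := by
    intro M hM
    obtain ⟨m, hm1, hm2⟩ := sInf_mem_of_ne_top (T := {x : ℕ∞ | ∃ k : ℕ, x = (k : ℕ∞) ∧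
      CoresDimLE (MonoidAlgebra A G) (fun N => Module.Injective (MonoidAlgebra A G) N) k M}) hM
    by_cases hmn : m ≤ n
    · have h5 : injDim (MonoidAlgebra A G) M ≤ (m : ℕ∞) := sInf_le ⟨m, rfl, hm2⟩
      rw [hn]
      exact le_trans h5 (Nat.cast_le.2 hmn)
    · have hnm : n ≤ m := le_of_not_ge hmn
      obtain ⟨K, hchain, htail⟩ := chain_split (fun _ h => h) n hnm hm2
      obtain ⟨K', htailchain, hK'⟩ := chain_of_cores (fun _ h => h) htail
      haveI : Module.Free A (MonoidAlgebra A G) := inferInstance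
      haveI : Module.Flat A (MonoidAlgebra A G) := Module.Flat.of_free
      have hres1 := chain_restrict (A := A) hchain
      have hres2 := chain_restrict (A := A) htailchain
      have hK'res : Module.Injective A
          ((ModuleCat.restrictScalars (algebraMap A (MonoidAlgebra A G))).obj K') :=
        injective_restrict_of_flat K' hK'
      have hKres : Module.Injective A
          ((ModuleCat.restrictScalars (algebraMap A (MonoidAlgebra A G))).obj K) :=
        lemF hs (m - n) _ _ hres2 hK'res n le_rfl _ hres1
      have h1 : IsGInj A (resA A G K) := ginj_of_injective hKres
      have h2 : ginjDim (MonoidAlgebra A G) K ≠ ⊤ := by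
        have h6 : CoresDimLE (MonoidAlgebra A G)
            (IsGInj (MonoidAlgebra A G)) (m - n) K :=
          coresDimLE_mono (fun X hX => ginj_of_injective hX) htail
        have h7 : ginjDim (MonoidAlgebra A G) K ≤ ((m - n : ℕ) : ℕ∞) :=
          sInf_le ⟨m - n, rfl, h6⟩
        exact fun hc => by
          rw [hc] at h7
          exact absurd h7 (by simp)
      have h3 : IsGInj (MonoidAlgebra A G) K := hyp K h1 h2
      have h4 : Module.Injective (MonoidAlgebra A G) K :=
        lemH (m - n) K (stablyGInj_of_isGInj h3) htail
      have h5 : CoresDimLE (MonoidAlgebra A G)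
          (fun N => Module.Injective (MonoidAlgebra A G) N) n M :=
        cores_of_chain hchain h4
      have h6 : injDim (MonoidAlgebra A G) M ≤ (n : ℕ∞) := sInf_le ⟨n, rfl, h5⟩
      rw [hn]
      exact h6
  exact iSup_le fun M => iSup_le fun hM => main M hM


end GP
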